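/- Let n ≥ 2 and k = n/2 (n even). The function u(x) = C log|x| - 1 on ℝ^n \ B̄₁, for any constant C > 0, satisfies S_k(D²u) = 0 and u = -1 on ∂B₁, but u(x) → +∞ as |x| → ∞. -/

import Mathlib

open Finset

noncomputable def esymm {m : ℕ} (k : ℕ) (lam : Fin m → ℝ) : ℝ :=
  ∑ s ∈ Finset.univ.powersetCard k, ∏ i ∈ s, lam i

noncomputable def esymmZ {m : ℕ} (k : ℤ) (lam : Fin m → ℝ) : ℝ :=
  if k < 0 then 0 else esymm k.toNat lam

noncomputable def esymmDel {m : ℕ} (k : ℕ) (lam : Fin m → ℝ) (a : Fin m) : ℝ :=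
  ∑ s ∈ (Finset.univ.erase a).powersetCard k, ∏ i ∈ s, lam i

noncomputable def esymmDelZ {m : ℕ} (k : ℤ) (lam : Fin m → ℝ) (a : Fin m) : ℝ :=
  if k < 0 then 0 else esymmDel k.toNat lam a

noncomputable def esymmDel2 {m : ℕ} (k : ℕ) (lam : Fin m → ℝ) (a b : Fin m) : ℝ :=
  ∑ s ∈ ((Finset.univ.erase a).erase b).powersetCard k, ∏ i ∈ s, lam i

noncomputable def esymmDel2Z {m : ℕ} (k : ℤ) (lam : Fin m → ℝ) (a b : Fin m) : ℝ :=
  if k < 0 then 0 else esymmDel2 k.toNat lam a b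

noncomputable def Smat {n : ℕ} (k : ℕ) (A : Matrix (Fin n) (Fin n) ℝ) : ℝ :=
  ∑ s ∈ Finset.univ.powersetCard k,
    (A.submatrix (Subtype.val : {i : Fin n // i ∈ s} → Fin n)
      (Subtype.val : {i : Fin n // i ∈ s} → Fin n)).det

noncomputable def SkDeriv {n : ℕ} (k : ℕ) (A : Matrix (Fin n) (Fin n) ℝ) (i j : Fin n) : ℝ :=
  deriv (fun t : ℝ => Smat k (A + t • Matrix.single i j 1)) 0

noncomputable def hess {n : ℕ} (f : EuclideanSpace ℝ (Fin n) → ℝ)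
    (x : EuclideanSpace ℝ (Fin n)) : Matrix (Fin n) (Fin n) ℝ :=
  fun i j => iteratedFDeriv ℝ 2 f x ![EuclideanSpace.single i 1, EuclideanSpace.single j 1]

noncomputable def eigMultiset {n : ℕ} (A : Matrix (Fin n) (Fin n) ℝ) : Multiset ℝ :=
  A.charpoly.roots

section Aux

open scoped RealInnerProductSpace

variable {n : ℕ}

lemma hasFDerivAt_qq (y : EuclideanSpace ℝ (Fin n)) :
    HasFDerivAt (fun z : EuclideanSpace ℝ (Fin n) => ⟪z, z⟫) ((2:ℝ) • innerSL ℝ y) y := by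
  have h := (hasFDerivAt_id (𝕜 := ℝ) y).inner ℝ (hasFDerivAt_id (𝕜 := ℝ) y)
  refine h.congr_fderiv ?_
  ext w
  simp [fderivInnerCLM_apply, two_mul]
  exact real_inner_comm y w

lemma inner_self_pos' (y : EuclideanSpace ℝ (Fin n)) (hy : y ≠ 0) : 0 < ⟪y, y⟫ := by
  rw [real_inner_self_eq_norm_sq]
  exact pow_pos (norm_pos_iff.mpr hy) 2

lemma hasFDerivAt_u (C : ℝ) (y : EuclideanSpace ℝ (Fin n)) (hy : y ≠ 0) :
    HasFDerivAt (fun z : EuclideanSpace ℝ (Fin n) => C * Real.log ‖z‖ - 1)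
      ((C * (⟪y, y⟫)⁻¹) • innerSL ℝ y) y := by
  have hq := hasFDerivAt_qq y
  have hqpos := inner_self_pos' y hy
  have hlog : HasDerivAt Real.log (⟪y, y⟫)⁻¹ ⟪y, y⟫ := Real.hasDerivAt_log hqpos.ne'
  have h1 := HasDerivAt.comp_hasFDerivAt
    (f := fun z : EuclideanSpace ℝ (Fin n) => ⟪z, z⟫) y hlog hq
  have h2 : HasFDerivAt (fun x : EuclideanSpace ℝ (Fin n) => C / 2 * (Real.log ∘ fun z : EuclideanSpace ℝ (Fin n) => ⟪z, z⟫) x - 1)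
      ((C / 2) • (⟪y, y⟫)⁻¹ • (2:ℝ) • innerSL ℝ y) y := (h1.const_mul (C / 2)).sub_const 1
  convert h2 using 1
  · funext z
    have hz : ⟪z, z⟫ = ‖z‖ ^ 2 := real_inner_self_eq_norm_sq z
    simp only [Function.comp, hz, Real.log_pow]
    push_cast
    ring
  · ext w
    simp only [ContinuousLinearMap.coe_smul', Pi.smul_apply, smul_eq_mul, innerSL_apply_apply]
    ring

noncomputable def innerSL' {n : ℕ} :
    EuclideanSpace ℝ (Fin n) →L[ℝ] (EuclideanSpace ℝ (Fin n) →L[ℝ] ℝ) := innerSL ℝ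

@[simp] lemma innerSL'_apply (x y : EuclideanSpace ℝ (Fin n)) : innerSL' x y = ⟪x, y⟫ := rfl

noncomputable def gfun (C : ℝ) (y : EuclideanSpace ℝ (Fin n)) :
    EuclideanSpace ℝ (Fin n) →L[ℝ] ℝ :=
  (C * (⟪y, y⟫)⁻¹) • innerSL ℝ y

lemma hasFDerivAt_gfun (C : ℝ) (x : EuclideanSpace ℝ (Fin n)) (hx : x ≠ 0) :
    HasFDerivAt (gfun C)
      ((C * (⟪x, x⟫)⁻¹) • innerSL'
        + ((C • ((-(⟪x, x⟫ ^ 2)⁻¹) • ((2:ℝ) • innerSL ℝ x))).smulRight (innerSL ℝ x))) x := by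
  have hqpos := inner_self_pos' x hx
  have hinv : HasDerivAt (fun t : ℝ => t⁻¹) (-(⟪x, x⟫ ^ 2)⁻¹) ⟪x, x⟫ := hasDerivAt_inv hqpos.ne'
  have hc : HasFDerivAt (fun y : EuclideanSpace ℝ (Fin n) => (⟪y, y⟫)⁻¹)
      ((-(⟪x, x⟫ ^ 2)⁻¹) • ((2:ℝ) • innerSL ℝ x)) x :=
    HasDerivAt.comp_hasFDerivAt (f := fun z : EuclideanSpace ℝ (Fin n) => ⟪z, z⟫) x hinv
      (hasFDerivAt_qq x)
  have hc2 := hc.const_mul C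
  have hL : HasFDerivAt (fun y : EuclideanSpace ℝ (Fin n) => innerSL ℝ y)
      (innerSL' (n := n)) x := innerSL'.hasFDerivAt
  exact hc2.smul hL

lemma hess_entry (C : ℝ) (u : EuclideanSpace ℝ (Fin n) → ℝ)
    (hu : ∀ x, u x = C * Real.log ‖x‖ - 1)
    (x : EuclideanSpace ℝ (Fin n)) (hx : x ≠ 0) (i j : Fin n) :
    hess u x i j = (C * (‖x‖ ^ 2)⁻¹) * (if i = j then 1 else 0)
      + (-(2 * C) * ((‖x‖ ^ 2)⁻¹) ^ 2) * (x i * x j) := by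
  have hufun : u = fun z : EuclideanSpace ℝ (Fin n) => C * Real.log ‖z‖ - 1 := funext hu
  have heq : fderiv ℝ u =ᶠ[nhds x] gfun C := by
    filter_upwards [IsOpen.mem_nhds isOpen_compl_singleton hx] with y hy
    rw [hufun]
    exact (hasFDerivAt_u C y hy).fderiv
  have hkey : fderiv ℝ (fderiv ℝ u) x
      = (C * (⟪x, x⟫)⁻¹) • innerSL'
        + ((C • ((-(⟪x, x⟫ ^ 2)⁻¹) • ((2:ℝ) • innerSL ℝ x))).smulRight (innerSL ℝ x)) :=
    heq.fderiv_eq.trans (hasFDerivAt_gfun C x hx).fderiv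
  rw [hess]
  rw [iteratedFDeriv_two_apply]
  simp only [Matrix.cons_val_zero, Matrix.cons_val_one, Matrix.head_cons]
  rw [hkey]
  have hq : ⟪x, x⟫ = ‖x‖ ^ 2 := real_inner_self_eq_norm_sq x
  simp only [ContinuousLinearMap.add_apply, ContinuousLinearMap.coe_smul', Pi.smul_apply,
    ContinuousLinearMap.smulRight_apply, ContinuousLinearMap.smul_apply, smul_eq_mul,
    innerSL_apply_apply, hq]
  simp only [innerSL'_apply, EuclideanSpace.inner_single_left, EuclideanSpace.single_apply,
    conj_trivial, one_mul, map_one]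
  by_cases hij : i = j
  · subst hij; simp [EuclideanSpace.inner_single_right]; ring
  · simp [hij, Ne.symm hij, EuclideanSpace.inner_single_right]; ring

lemma det_aux {ι : Type*} [Fintype ι] [DecidableEq ι] (α : ℝ) (hα : α ≠ 0) (w v : ι → ℝ) :
    (Matrix.of fun i j => α * (if i = j then 1 else 0) + w i * v j).det
      = α ^ Fintype.card ι + α ^ (Fintype.card ι - 1) * ∑ i, v i * w i := by
  have hm : (Matrix.of fun i j => α * (if i = j then 1 else 0) + w i * v j)
      = α • (1 + Matrix.replicateCol Unit (α⁻¹ • w) * Matrix.replicateRow Unit v) := by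
    ext i j
    simp [Matrix.one_apply, Matrix.mul_apply, mul_add, hα, mul_comm, mul_left_comm]
    by_cases h : i = j <;> field_simp [h]
  rw [hm, Matrix.det_smul, Matrix.det_one_add_replicateCol_mul_replicateRow]
  rcases Nat.eq_zero_or_pos (Fintype.card ι) with h0 | h0
  · have : IsEmpty ι := Fintype.card_eq_zero_iff.mp h0
    simp [h0, dotProduct]
  · obtain ⟨m, hm'⟩ : ∃ m, Fintype.card ι = m + 1 := ⟨_, (Nat.succ_pred_eq_of_pos h0).symm⟩
    rw [hm']
    simp only [dotProduct, Pi.smul_apply, smul_eq_mul, Nat.add_sub_cancel]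
    have hsum : ∑ x : ι, v x * (α⁻¹ * w x) = α⁻¹ * ∑ x : ι, v x * w x := by
      rw [Finset.mul_sum]; exact Finset.sum_congr rfl fun i _ => by ring
    rw [hsum, pow_succ]
    field_simp

lemma card_filter_mem (n k : ℕ) (hk : 0 < k) (i : Fin n) :
    ((Finset.univ.powersetCard k).filter (fun s : Finset (Fin n) => i ∈ s)).card
      = (n - 1).choose (k - 1) := by
  have hbij : ((Finset.univ.powersetCard k).filter (fun s : Finset (Fin n) => i ∈ s)).card
      = ((Finset.univ.erase i).powersetCard (k - 1)).card := by
    refine Finset.card_bij' (fun s _ => s.erase i) (fun t _ => insert i t) ?_ ?_ ?_ ?_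
    · intro s hs
      simp only [Finset.mem_filter, Finset.mem_powersetCard] at hs
      rw [Finset.mem_powersetCard]
      exact ⟨fun x hx => Finset.mem_erase.mpr ⟨(Finset.mem_erase.mp hx).1,
        Finset.mem_univ x⟩, by rw [Finset.card_erase_of_mem hs.2, hs.1.2]⟩
    · intro t ht
      rw [Finset.mem_powersetCard] at ht
      have hit : i ∉ t := fun h => (Finset.mem_erase.mp (ht.1 h)).1 rfl
      simp only [Finset.mem_filter, Finset.mem_powersetCard]
      refine ⟨⟨fun x _ => Finset.mem_univ x, ?_⟩, Finset.mem_insert_self i t⟩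
      rw [Finset.card_insert_of_notMem hit, ht.2, Nat.sub_add_cancel hk]
    · intro s hs
      simp only [Finset.mem_filter] at hs
      exact Finset.insert_erase hs.2
    · intro t ht
      rw [Finset.mem_powersetCard] at ht
      have hit : i ∉ t := fun h => (Finset.mem_erase.mp (ht.1 h)).1 rfl
      exact Finset.erase_insert hit
  rw [hbij, Finset.card_powersetCard, Finset.card_erase_of_mem (Finset.mem_univ i),
    Finset.card_univ, Fintype.card_fin]

lemma sum_powersetCard_sum {n k : ℕ} (hk : 0 < k) (f : Fin n → ℝ) :
    ∑ s ∈ Finset.univ.powersetCard k, ∑ i ∈ s, f i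
      = ((n - 1).choose (k - 1) : ℝ) * ∑ i, f i := by
  have h1 : ∀ s ∈ Finset.univ.powersetCard k, ∑ i ∈ s, f i
      = ∑ i : Fin n, if i ∈ s then f i else 0 := by
    intro s _
    rw [Finset.sum_ite_mem, Finset.univ_inter]
  rw [Finset.sum_congr rfl h1, Finset.sum_comm]
  rw [Finset.mul_sum]
  refine Finset.sum_congr rfl fun i _ => ?_
  rw [← Finset.sum_filter, Finset.sum_const, nsmul_eq_mul, card_filter_mem n k hk i, mul_comm]

lemma Smat_eq {n : ℕ} (k : ℕ) (hk : 0 < k) (α : ℝ) (hα : α ≠ 0) (w v : Fin n → ℝ) :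
    Smat k (Matrix.of fun i j => α * (if i = j then 1 else 0) + w i * v j)
      = (n.choose k : ℝ) * α ^ k
        + α ^ (k - 1) * ((n - 1).choose (k - 1) : ℝ) * ∑ i, v i * w i := by
  rw [Smat]
  have hterm : ∀ s ∈ Finset.univ.powersetCard k,
      ((Matrix.of fun i j => α * (if i = j then 1 else 0) + w i * v j).submatrix
        (Subtype.val : {i : Fin n // i ∈ s} → Fin n)
        (Subtype.val : {i : Fin n // i ∈ s} → Fin n)).det
      = α ^ k + α ^ (k - 1) * ∑ i ∈ s, v i * w i := by
    intro s hs
    have hcard : s.card = k := (Finset.mem_powersetCard.mp hs).2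
    have hsub : ((Matrix.of fun i j => α * (if i = j then 1 else 0) + w i * v j).submatrix
        (Subtype.val : {i : Fin n // i ∈ s} → Fin n)
        (Subtype.val : {i : Fin n // i ∈ s} → Fin n))
        = Matrix.of fun i j : {i : Fin n // i ∈ s} =>
            α * (if i = j then 1 else 0) + w i * v j := by
      ext i j
      simp [Matrix.submatrix_apply, Subtype.coe_injective.eq_iff]
    rw [hsub, det_aux α hα, Fintype.card_coe, hcard]
    congr 1
    · congr 1
      rw [← Finset.sum_attach s (fun i => v i * w i)]
      rfl
  rw [Finset.sum_congr rfl hterm, Finset.sum_add_distrib, Finset.sum_const,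
    Finset.card_powersetCard, Finset.card_univ, Fintype.card_fin, ← Finset.mul_sum,
    sum_powersetCard_sum hk, nsmul_eq_mul]
  ring

lemma choose_identity (m : ℕ) : (2 * (m + 1)).choose (m + 1) = 2 * (2 * m + 1).choose m := by
  have h1 : 2 * (m + 1) = (2 * m + 1) + 1 := by ring
  rw [h1, Nat.choose_succ_succ]
  simp only [Nat.succ_eq_add_one]
  have h2 : (2 * m + 1).choose m = (2 * m + 1).choose (m + 1) := by
    have := Nat.choose_symm (n := 2 * m + 1) (k := m + 1) (by omega)
    simpa [show 2 * m + 1 - (m + 1) = m by omega] using this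
  omega

end Aux

theorem stmt3 (n k : ℕ) (hk : 0 < k) (hnk : n = 2 * k) (C : ℝ) (hC : 0 < C)
    (u : EuclideanSpace ℝ (Fin n) → ℝ)
    (hu : ∀ x : EuclideanSpace ℝ (Fin n), u x = C * Real.log ‖x‖ - 1) :
    (∀ x : EuclideanSpace ℝ (Fin n), 1 < ‖x‖ → Smat k (hess u x) = 0) ∧
    (∀ x : EuclideanSpace ℝ (Fin n), ‖x‖ = 1 → u x = -1) ∧
    Filter.Tendsto u (Filter.comap norm Filter.atTop) Filter.atTop := by
  refine ⟨?_, ?_, ?_⟩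
  · intro x hx1
    have hx0 : x ≠ 0 := by
      intro h
      rw [h, norm_zero] at hx1
      linarith
    set r2 : ℝ := ‖x‖ ^ 2 with hr2def
    have hr2pos : 0 < r2 := pow_pos (norm_pos_iff.mpr hx0) 2
    have hr2 : r2 ≠ 0 := hr2pos.ne'
    set α : ℝ := C * r2⁻¹ with hαdef
    have hα : α ≠ 0 := mul_ne_zero hC.ne' (inv_ne_zero hr2)
    have hmat : hess u x = Matrix.of fun i j =>
        α * (if i = j then 1 else 0) + (-(2 * C) * (r2⁻¹) ^ 2 * x i) * (x j) := by
      funext i j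
      rw [hess_entry C u hu x hx0 i j]
      simp only [Matrix.of_apply]
      ring
    have hsumsq : ∑ i, x i * x i = r2 := by
      rw [hr2def, ← real_inner_self_eq_norm_sq]
      simp only [PiLp.inner_apply, RCLike.inner_apply, conj_trivial]
    rw [hmat, Smat_eq k hk α hα]
    have hsum : ∑ i, x i * (-(2 * C) * (r2⁻¹) ^ 2 * x i)
        = -(2 * C) * (r2⁻¹) ^ 2 * r2 := by
      rw [← hsumsq, Finset.mul_sum]
      exact Finset.sum_congr rfl fun i _ => by ring
    rw [hsum]
    obtain ⟨m, rfl⟩ : ∃ m, k = m + 1 := ⟨k - 1, (Nat.succ_pred_eq_of_pos hk).symm⟩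
    subst hnk
    have hch : ((2 * (m + 1)).choose (m + 1) : ℝ) = 2 * ((2 * (m + 1) - 1).choose m : ℝ) := by
      have h1 : 2 * (m + 1) - 1 = 2 * m + 1 := by omega
      rw [h1]
      exact_mod_cast choose_identity m
    simp only [Nat.add_sub_cancel]
    rw [hch]
    have hinv : (r2⁻¹) ^ 2 * r2 = r2⁻¹ := by field_simp
    have hexp : -(2 * C) * (r2⁻¹) ^ 2 * r2 = -2 * α := by
      rw [hαdef]; field_simp
    rw [hexp, pow_succ]
    ring
  · intro x hx
    rw [hu x, hx, Real.log_one]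
    ring
  · have hfun : u = (fun r : ℝ => C * Real.log r - 1) ∘ norm := funext fun x => hu x
    rw [hfun]
    have h1 : Filter.Tendsto (fun r : ℝ => C * Real.log r) Filter.atTop Filter.atTop :=
      Filter.Tendsto.const_mul_atTop hC Real.tendsto_log_atTop
    have h2 : Filter.Tendsto (fun r : ℝ => C * Real.log r - 1) Filter.atTop Filter.atTop := by
      simpa [sub_eq_add_neg] using Filter.tendsto_atTop_add_const_right Filter.atTop (-1) h1
    exact h2.comp Filter.tendsto_comap
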